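/- Let (x_n) be a sequence in a Hilbert space H converging weakly to x, and let D_n, D be measurable subsets of Ω with χ_{D_n} → χ_D in L¹(Ω). Assume the bilinear forms a_S(u,v) = ∫_S b(u,v) are given by a fixed continuous nonnegative symmetric bilinear density b (so a_S(u,u)^{1/2} defines a seminorm controlled by ‖·‖_H). Then a_D(x,x) ≤ liminf_n a_{D_n}(x_n, x_n). -/

import Mathlib

/-! With `u n = T (x n)` and `u = T xlim`, composing functionals with `T` shows `u n ⇀ u` weakly
in `L²`, so `u n` is bounded by uniform boundedness. The localized energy `∫_S ‖v‖²` is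
`‖1_S v‖²`, and multiplication by `1_S` is an orthogonal projection. Since `1_{D n} u → 1_D u` in
norm, expanding `‖1_{D n} u n - 1_{D n} u‖² ≥ 0` gives
`‖1_{D n} u n‖² ≥ 2 ⟪u n, 1_{D n} u⟫ - ‖1_{D n} u‖²`, whose right side tends to `‖1_D u‖²`. -/

open Filter MeasureTheory Topology
open scoped RealInnerProductSpace

theorem exists_norm_le_of_forall_tendsto_dual {𝕜 E : Type*} [RCLike 𝕜] [NormedAddCommGroup E]
    [NormedSpace 𝕜 E] {x : ℕ → E} {y : E}
    (h : ∀ f : StrongDual 𝕜 E, Tendsto (fun n => f (x n)) atTop (𝓝 (f y))) :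
    ∃ C, ∀ n, ‖x n‖ ≤ C := by
  obtain ⟨C, hC⟩ := banach_steinhaus (g := fun n => NormedSpace.inclusionInDoubleDualLi 𝕜 (x n))
    fun f => by
      obtain ⟨C, hC⟩ := (h f).norm.bddAbove_range
      exact ⟨C, fun n => hC ⟨n, rfl⟩⟩
  exact ⟨C, fun n => (NormedSpace.inclusionInDoubleDualLi 𝕜).norm_map (x n) ▸ hC n⟩

theorem tendsto_inner_of_forall_tendsto_inner {𝕜 E : Type*} [RCLike 𝕜] [NormedAddCommGroup E]
    [InnerProductSpace 𝕜 E] {u w : ℕ → E} {u₀ w₀ : E}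
    (hu : ∀ v, Tendsto (fun n => inner 𝕜 (u n) v) atTop (𝓝 (inner 𝕜 u₀ v)))
    (hbdd : ∃ C, ∀ n, ‖u n‖ ≤ C) (hw : Tendsto w atTop (𝓝 w₀)) :
    Tendsto (fun n => inner 𝕜 (u n) (w n)) atTop (𝓝 (inner 𝕜 u₀ w₀)) := by
  obtain ⟨C, hC⟩ := hbdd
  have hsmall : Tendsto (fun n => inner 𝕜 (u n) (w n - w₀)) atTop (𝓝 0) := by
    refine squeeze_zero_norm (fun n => (norm_inner_le_norm _ _).trans
      (mul_le_mul_of_nonneg_right (hC n) (norm_nonneg _))) ?_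
    simpa using (tendsto_iff_norm_sub_tendsto_zero.mp hw).const_mul C
  simpa [← inner_add_right] using (hu w₀).add hsmall

theorem norm_sq_le_liminf_norm_sq {E : Type*} [NormedAddCommGroup E] [InnerProductSpace ℝ E]
    {a b : ℕ → E} {c : E} (ha : ∃ C, ∀ n, ‖a n‖ ≤ C)
    (hab : Tendsto (fun n => ⟪a n, b n⟫) atTop (𝓝 (‖c‖ ^ 2))) (hb : Tendsto b atTop (𝓝 c)) :
    ‖c‖ ^ 2 ≤ liminf (fun n => ‖a n‖ ^ 2) atTop := by
  obtain ⟨C, hC⟩ := ha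
  have hlow : ∀ n, 2 * ⟪a n, b n⟫ - ‖b n‖ ^ 2 ≤ ‖a n‖ ^ 2 := fun n => by
    nlinarith [norm_sub_sq_real (a n) (b n), sq_nonneg ‖a n - b n‖]
  have hlim : Tendsto (fun n => 2 * ⟪a n, b n⟫ - ‖b n‖ ^ 2) atTop (𝓝 (‖c‖ ^ 2)) := by
    convert (hab.const_mul 2).sub (hb.norm.pow 2) using 2; ring
  calc ‖c‖ ^ 2 = liminf (fun n => 2 * ⟪a n, b n⟫ - ‖b n‖ ^ 2) atTop := hlim.liminf_eq.symm
    _ ≤ liminf (fun n => ‖a n‖ ^ 2) atTop :=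
      liminf_le_liminf (Eventually.of_forall hlow) hlim.isBoundedUnder_ge
        (isCoboundedUnder_ge_of_le atTop fun n => pow_le_pow_left₀ (norm_nonneg _) (hC n) 2)

namespace MeasureTheory.Lp

variable {Ω E : Type*} [MeasurableSpace Ω] {μ : Measure Ω} [NormedAddCommGroup E]
  {p : ENNReal} {s t : Set Ω}

noncomputable def indicator (hs : MeasurableSet s) (f : Lp E p μ) : Lp E p μ :=
  ((Lp.memLp f).indicator hs).toLp _

theorem coeFn_indicator (hs : MeasurableSet s) (f : Lp E p μ) :
    ⇑(indicator hs f) =ᵐ[μ] s.indicator f :=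
  MemLp.coeFn_toLp _

theorem norm_indicator_le (hs : MeasurableSet s) (f : Lp E p μ) : ‖indicator hs f‖ ≤ ‖f‖ :=
  norm_le_norm_of_ae_le <| (coeFn_indicator hs f).mono fun ω hω => by
    rw [hω]; exact norm_indicator_le_norm_self _ _

theorem norm_indicator_sub_indicator_le (hs : MeasurableSet s) (ht : MeasurableSet t)
    (f : Lp E p μ) : ‖indicator hs f - indicator ht f‖ ≤ ‖indicator (hs.symmDiff ht) f‖ :=
  norm_le_norm_of_ae_le <| by
    filter_upwards [coeFn_sub (indicator hs f) (indicator ht f), coeFn_indicator hs f,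
      coeFn_indicator ht f, coeFn_indicator (hs.symmDiff ht) f] with ω hsub hs' ht' hst
    rw [hsub, Pi.sub_apply, hs', ht', hst]
    by_cases hωs : ω ∈ s <;> by_cases hωt : ω ∈ t <;> simp [hωs, hωt, Set.mem_symmDiff]

theorem indicator_indicator (hs : MeasurableSet s) (f : Lp E p μ) :
    indicator hs (indicator hs f) = indicator hs f := by
  refine ext ?_
  filter_upwards [coeFn_indicator hs (indicator hs f), coeFn_indicator hs f] with ω h1 h2
  rw [h1]
  by_cases hω : ω ∈ s <;> simp [hω, h2]

variable [InnerProductSpace ℝ E]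

theorem inner_indicator_left (hs : MeasurableSet s) (f g : Lp E 2 μ) :
    ⟪indicator hs f, g⟫ = ⟪f, indicator hs g⟫ := by
  rw [L2.inner_def, L2.inner_def]
  refine integral_congr_ae ?_
  filter_upwards [coeFn_indicator hs f, coeFn_indicator hs g] with ω hf hg
  rw [hf, hg]
  by_cases hω : ω ∈ s <;> simp [hω]

theorem norm_indicator_sq (hs : MeasurableSet s) (f : Lp E 2 μ) :
    ‖indicator hs f‖ ^ 2 = ∫ ω in s, ‖f ω‖ ^ 2 ∂μ := by
  rw [← real_inner_self_eq_norm_sq, L2.inner_def, ← integral_indicator hs]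
  refine integral_congr_ae ?_
  filter_upwards [coeFn_indicator hs f] with ω hω
  rw [hω, real_inner_self_eq_norm_sq]
  by_cases hω : ω ∈ s <;> simp [hω]

theorem tendsto_indicator {s : ℕ → Set Ω} (hs : ∀ n, MeasurableSet (s n)) (ht : MeasurableSet t)
    (hst : Tendsto (fun n => μ (symmDiff (s n) t)) atTop (𝓝 0)) (f : Lp E 2 μ) :
    Tendsto (fun n => indicator (hs n) f) atTop (𝓝 (indicator ht f)) := by
  have hsq : Tendsto (fun n => ‖indicator ((hs n).symmDiff ht) f‖ ^ 2) atTop (𝓝 0) := by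
    simp_rw [norm_indicator_sq]
    exact ((memLp_two_iff_integrable_sq_norm (Lp.aestronglyMeasurable f)).mp
      (Lp.memLp f)).tendsto_setIntegral_nhds_zero hst
  have hnorm := (Real.continuous_sqrt.tendsto 0).comp hsq
  simp only [Function.comp_def, Real.sqrt_sq (norm_nonneg _), Real.sqrt_zero] at hnorm
  exact tendsto_iff_norm_sub_tendsto_zero.mpr
    (squeeze_zero (fun _ => norm_nonneg _) (fun n => norm_indicator_sub_indicator_le _ _ _) hnorm)

end MeasureTheory.Lp

theorem localized_energy_lower_semicontinuous_general
    {H : Type*} [NormedAddCommGroup H] [InnerProductSpace ℝ H]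
    {Ω : Type*} [MeasurableSpace Ω] (μ : Measure Ω) (k : ℕ)
    (T : H →L[ℝ] Lp (EuclideanSpace ℝ (Fin k)) 2 μ)
    (x : ℕ → H) (xlim : H)
    (hweak : ∀ f : H →L[ℝ] ℝ, Tendsto (fun n => f (x n)) atTop (nhds (f xlim)))
    (D : ℕ → Set Ω) (Dlim : Set Ω)
    (hD : ∀ n, MeasurableSet (D n)) (hDlim : MeasurableSet Dlim)
    (hsets : Tendsto (fun n => μ (symmDiff (D n) Dlim)) atTop (nhds 0)) :
    (∫ ω in Dlim, ‖(T xlim : Lp (EuclideanSpace ℝ (Fin k)) 2 μ) ω‖ ^ 2 ∂μ) ≤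
      atTop.liminf
        (fun n => ∫ ω in D n, ‖(T (x n) : Lp (EuclideanSpace ℝ (Fin k)) 2 μ) ω‖ ^ 2 ∂μ) := by
  have hTx : ∀ v, Tendsto (fun n => ⟪T (x n), v⟫) atTop (𝓝 ⟪T xlim, v⟫) := fun v => by
    simpa only [real_inner_comm v, ContinuousLinearMap.comp_apply, innerSL_apply_apply] using
      hweak ((innerSL ℝ v).comp T)
  have hbdd : ∃ C, ∀ n, ‖T (x n)‖ ≤ C :=
    exists_norm_le_of_forall_tendsto_dual (𝕜 := ℝ) fun f => hweak (f.comp T)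
  have hDT := Lp.tendsto_indicator hD hDlim hsets (T xlim)
  have hself : ⟪T xlim, Lp.indicator hDlim (T xlim)⟫ = ‖Lp.indicator hDlim (T xlim)‖ ^ 2 := by
    rw [← real_inner_self_eq_norm_sq, Lp.inner_indicator_left, Lp.indicator_indicator]
  simp_rw [← Lp.norm_indicator_sq (hD _), ← Lp.norm_indicator_sq hDlim]
  refine norm_sq_le_liminf_norm_sq ?_ ?_ hDT
  · obtain ⟨C, hC⟩ := hbdd
    exact ⟨C, fun n => (Lp.norm_indicator_le _ _).trans (hC n)⟩
  · simpa only [Lp.inner_indicator_left, Lp.indicator_indicator, hself] using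
      tendsto_inner_of_forall_tendsto_inner hTx hbdd hDT

theorem localized_energy_lower_semicontinuous
    {H : Type*} [NormedAddCommGroup H] [InnerProductSpace ℝ H] [CompleteSpace H]
    {Ω : Type*} [MeasurableSpace Ω] (μ : Measure Ω) (k : ℕ)
    (T : H →L[ℝ] Lp (EuclideanSpace ℝ (Fin k)) 2 μ)
    (x : ℕ → H) (xlim : H)
    (hweak : ∀ f : H →L[ℝ] ℝ, Tendsto (fun n => f (x n)) atTop (nhds (f xlim)))
    (D : ℕ → Set Ω) (Dlim : Set Ω)
    (hD : ∀ n, MeasurableSet (D n)) (hDlim : MeasurableSet Dlim)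
    (hsets : Tendsto (fun n => μ (symmDiff (D n) Dlim)) atTop (nhds 0)) :
    (∫ ω in Dlim, ‖(T xlim : Lp (EuclideanSpace ℝ (Fin k)) 2 μ) ω‖ ^ 2 ∂μ) ≤
      atTop.liminf
        (fun n => ∫ ω in D n, ‖(T (x n) : Lp (EuclideanSpace ℝ (Fin k)) 2 μ) ω‖ ^ 2 ∂μ) :=
  localized_energy_lower_semicontinuous_general μ k T x xlim hweak D Dlim hD hDlim hsets
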